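/- arXiv:1212.0589 — 3 statements merged into one kernel-verified Lean document; each statement's English description precedes it below -/
import Mathlib

section
/- The real line ℝ does not satisfy the selection principle S₁(Ω,𝒪): there is a sequence ⟨𝒰ₙ⟩ (n ≥ 1) of ω-covers of ℝ such that for every choice of Uₙ ∈ 𝒰ₙ, the family {Uₙ : n ≥ 1} fails to cover ℝ. -/
/-! Take for `𝒰ₙ` all open sets of Lebesgue measure `< 2⁻ⁿ`. Finite sets are null, so by outer
regularity each of them lies in such a set, making `𝒰ₙ` an ω-cover; but any selection `Uₙ ∈ 𝒰ₙ`
has union of measure at most `∑ 2⁻ⁿ = 2 < ∞ = volume ℝ`. -/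

open Set

/-- An ω-cover: an open cover not containing the whole space such that every
finite subset lies in a single member. -/
def IsOmegaCover {X : Type*} [TopologicalSpace X] (𝒰 : Set (Set X)) : Prop :=
  (∀ u ∈ 𝒰, IsOpen u) ∧ (univ : Set X) ∉ 𝒰 ∧ ⋃₀ 𝒰 = univ ∧
    ∀ F : Set X, F.Finite → ∃ u ∈ 𝒰, F ⊆ u

open MeasureTheory

theorem isOmegaCover_of_forall_finite_subset {X : Type*} [TopologicalSpace X] {𝒰 : Set (Set X)}
    (h_open : ∀ u ∈ 𝒰, IsOpen u) (h_univ : univ ∉ 𝒰)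
    (h_finite : ∀ F : Set X, F.Finite → ∃ u ∈ 𝒰, F ⊆ u) :
    IsOmegaCover 𝒰 := by
  refine ⟨h_open, h_univ, eq_univ_of_forall fun x => ?_, h_finite⟩
  obtain ⟨u, hu, hxu⟩ := h_finite {x} (finite_singleton x)
  exact ⟨u, hu, hxu rfl⟩

theorem isOmegaCover_setOf_isOpen_measure_lt {X : Type*} [TopologicalSpace X]
    [MeasurableSpace X] (μ : Measure X) [μ.OuterRegular] [NullSingletonClass μ]
    {ε : ENNReal} (hε : 0 < ε) (hε_univ : ε ≤ μ univ) :
    IsOmegaCover {u : Set X | IsOpen u ∧ μ u < ε} := by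
  refine isOmegaCover_of_forall_finite_subset (fun u hu => hu.1)
    (fun h => (h.2.trans_le hε_univ).false) fun F hF => ?_
  obtain ⟨u, hFu, hu, hμu⟩ := F.exists_isOpen_lt_of_lt ε (by rwa [hF.measure_zero μ])
  exact ⟨u, ⟨hu, hμu⟩, hFu⟩

theorem iUnion_ne_univ_of_tsum_lt {X : Type*} [MeasurableSpace X] (μ : Measure X)
    {f : ℕ → Set X} {ε : ℕ → ENNReal} (hf : ∀ n, μ (f n) < ε n) (hε : ∑' n, ε n < μ univ) :
    (⋃ n, f n) ≠ univ := by
  intro h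
  have : μ univ ≤ ∑' n, ε n := calc
    μ univ = μ (⋃ n, f n) := by rw [h]
    _ ≤ ∑' n, μ (f n) := measure_iUnion_le f
    _ ≤ ∑' n, ε n := ENNReal.tsum_le_tsum fun n => (hf n).le
  exact this.not_gt hε

theorem stmt4 :
    ∃ 𝒰 : ℕ → Set (Set ℝ), (∀ n, IsOmegaCover (𝒰 n)) ∧
      ∀ f : ℕ → Set ℝ, (∀ n, f n ∈ 𝒰 n) → (⋃ n, f n) ≠ univ := by
  refine ⟨fun n => {u | IsOpen u ∧ volume u < 2⁻¹ ^ n}, fun n => ?_, fun f hf => ?_⟩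
  · exact isOmegaCover_setOf_isOpen_measure_lt volume (ENNReal.pow_pos (by norm_num) n)
      (by simp)
  · refine iUnion_ne_univ_of_tsum_lt volume (fun n => (hf n).2) ?_
    simp [ENNReal.tsum_geometric]
end

section
/- The real line ℝ does not satisfy S_fin(Ω,𝒦): there is a sequence ⟨𝒰ₙ⟩ of ω-covers of ℝ such that for every choice of finite subfamilies 𝒱ₙ ⊆ 𝒰ₙ, the union ⋃ₙ 𝒱ₙ is not a k-cover of ℝ. -/
/-! Let `𝒰` be the family of open sets of Lebesgue measure `< 1`. Finite sets are null, so by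
outer regularity each of them lies in a member of `𝒰`, which is thus an ω-cover. But no member
of `𝒰` contains the compact interval `[0, 1]` of measure `1`, so no subfamily of `𝒰`, however
selected, is a k-cover. -/

open Set

/-- A k-cover: an open cover not containing the whole space such that every
compact subset lies in a single member. -/
def IsKCover {X : Type*} [TopologicalSpace X] (𝒰 : Set (Set X)) : Prop :=
  (∀ u ∈ 𝒰, IsOpen u) ∧ (univ : Set X) ∉ 𝒰 ∧ ⋃₀ 𝒰 = univ ∧
    ∀ K : Set X, IsCompact K → ∃ u ∈ 𝒰, K ⊆ u

open MeasureTheory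

section

variable {X : Type*} [TopologicalSpace X] [MeasurableSpace X]

def openSetsOfMeasureLT (μ : Measure X) (c : ENNReal) : Set (Set X) :=
  {u | IsOpen u ∧ μ u < c}

theorem isOmegaCover_openSetsOfMeasureLT {μ : Measure X} [NullSingletonClass μ] [μ.OuterRegular]
    {c : ENNReal} (hc : 0 < c) (hμ : c ≤ μ univ) : IsOmegaCover (openSetsOfMeasureLT μ c) := by
  have finite_subset : ∀ F : Set X, F.Finite → ∃ u ∈ openSetsOfMeasureLT μ c, F ⊆ u := by
    intro F hF
    obtain ⟨u, hFu, hu, hμu⟩ := F.exists_isOpen_lt_of_lt c (by rwa [hF.measure_zero μ])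
    exact ⟨u, ⟨hu, hμu⟩, hFu⟩
  refine ⟨fun u hu => hu.1, fun huniv => (huniv.2.trans_le hμ).false, ?_, finite_subset⟩
  refine eq_univ_of_forall fun x => ?_
  obtain ⟨u, hu, hxu⟩ := finite_subset {x} (finite_singleton x)
  exact mem_sUnion_of_mem (singleton_subset_iff.mp hxu) hu

theorem not_isKCover_of_measure_lt {μ : Measure X} {𝒱 : Set (Set X)} {K : Set X}
    (hK : IsCompact K) (h𝒱 : ∀ u ∈ 𝒱, μ u < μ K) : ¬ IsKCover 𝒱 := by
  rintro ⟨-, -, -, hcompact⟩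
  obtain ⟨u, hu, hKu⟩ := hcompact K hK
  exact (h𝒱 u hu).not_ge (measure_mono hKu)

end

theorem stmt5 :
    ∃ 𝒰 : ℕ → Set (Set ℝ), (∀ n, IsOmegaCover (𝒰 n)) ∧
      ∀ 𝒱 : ℕ → Set (Set ℝ), (∀ n, 𝒱 n ⊆ 𝒰 n ∧ (𝒱 n).Finite) →
        ¬ IsKCover (⋃ n, 𝒱 n) := by
  have volume_Icc_zero_one : volume (Icc (0 : ℝ) 1) = 1 := by simp [Real.volume_Icc]
  refine ⟨fun _ => openSetsOfMeasureLT volume 1, fun _ => ?_, fun 𝒱 h𝒱 => ?_⟩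
  · exact isOmegaCover_openSetsOfMeasureLT one_pos (by simp)
  · refine not_isKCover_of_measure_lt (μ := volume) (isCompact_Icc (a := 0) (b := 1))
      fun u hu => ?_
    obtain ⟨n, hn⟩ := mem_iUnion.mp hu
    exact volume_Icc_zero_one ▸ ((h𝒱 n).1 hn).2
end

section
/- For every m ≥ 1, the euclidean space ℝ^m satisfies S_fin(Ω,Ω): for every sequence ⟨𝒰ₙ⟩ (n ≥ 1) of ω-covers of ℝ^m there exist finite subfamilies 𝒱ₙ ⊆ 𝒰ₙ such that ⋃ₙ 𝒱ₙ is an ω-cover of ℝ^m. -/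
/-!
Cover `X` by an increasing sequence of compact sets `Kₙ`. For an ω-cover `𝒰`, the sets `uⁿ`,
`u ∈ 𝒰`, form an open cover of the compact set `Kₙⁿ`, so finitely many members of `𝒰` already
contain every subset of `Kₙ` with at most `n` points. Choosing these finitely many members from
the `n`-th cover yields an ω-cover, since every finite set lies in some `Kₙ` and has at most `n`
points for large `n`.
-/

open Set

/-- The selection principle `S_fin(Ω, Ω)`. -/
def SFinOmegaOmega (X : Type*) [TopologicalSpace X] : Prop :=
  ∀ 𝒰 : ℕ → Set (Set X), (∀ n, IsOmegaCover (𝒰 n)) →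
    ∃ 𝒱 : ℕ → Set (Set X), (∀ n, 𝒱 n ⊆ 𝒰 n ∧ (𝒱 n).Finite) ∧ IsOmegaCover (⋃ n, 𝒱 n)

variable {X : Type*} [TopologicalSpace X]

theorem Set.Finite.exists_subset_compactCovering [SigmaCompactSpace X] {F : Set X}
    (hF : F.Finite) : ∃ n, F ⊆ compactCovering X n := by
  lift F to Finset X using hF
  exact (Monotone.directed_le fun _ _ h => compactCovering_subset X h)
    |>.exists_mem_subset_of_finset_subset_biUnion (by simp [iUnion_compactCovering])

namespace IsOmegaCover

theorem of_forall_finite_subset {𝒱 : Set (Set X)} (hopen : ∀ u ∈ 𝒱, IsOpen u)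
    (huniv : univ ∉ 𝒱) (hfin : ∀ F : Set X, F.Finite → ∃ u ∈ 𝒱, F ⊆ u) : IsOmegaCover 𝒱 := by
  refine ⟨hopen, huniv, eq_univ_of_forall fun x => ?_, hfin⟩
  obtain ⟨u, hu, hxu⟩ := hfin {x} (finite_singleton x)
  exact ⟨u, hu, hxu rfl⟩

variable {𝒰 : Set (Set X)} {K : Set X}

theorem exists_finite_forall_range_subset (h : IsOmegaCover 𝒰) (hK : IsCompact K) (k : ℕ) :
    ∃ 𝒱 ⊆ 𝒰, 𝒱.Finite ∧ ∀ f : Fin k → X, range f ⊆ K → ∃ u ∈ 𝒱, range f ⊆ u := by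
  have hcover : univ.pi (fun _ : Fin k => K) ⊆ ⋃ u ∈ 𝒰, univ.pi fun _ => u := by
    intro f _
    obtain ⟨u, hu, hfu⟩ := h.2.2.2 (range f) (finite_range f)
    exact mem_iUnion₂.2 ⟨u, hu, fun i _ => hfu ⟨i, rfl⟩⟩
  obtain ⟨𝒱, h𝒱𝒰, h𝒱fin, h𝒱⟩ := (isCompact_univ_pi fun _ => hK).elim_finite_subcover_image
    (fun u hu => isOpen_set_pi finite_univ fun _ _ => h.1 u hu) hcover
  refine ⟨𝒱, h𝒱𝒰, h𝒱fin, fun f hf => ?_⟩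
  obtain ⟨u, hu, hfu⟩ := mem_iUnion₂.1 (h𝒱 fun i _ => hf ⟨i, rfl⟩)
  exact ⟨u, hu, range_subset_iff.2 fun i => hfu i (mem_univ i)⟩

theorem exists_finite_forall_ncard_le (h : IsOmegaCover 𝒰) (hK : IsCompact K) (n : ℕ) :
    ∃ 𝒱 ⊆ 𝒰, 𝒱.Finite ∧
      ∀ F ⊆ K, F.Finite → F.ncard ≤ n → ∃ u ∈ 𝒱, F ⊆ u := by
  choose 𝒲 h𝒲𝒰 h𝒲fin h𝒲 using h.exists_finite_forall_range_subset hK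
  refine ⟨⋃ k ≤ n, 𝒲 k, iUnion₂_subset fun k _ => h𝒲𝒰 k,
    (finite_le_nat n).biUnion fun k _ => h𝒲fin k, fun F hFK hF hFn => ?_⟩
  obtain ⟨k, f, hf, rfl⟩ := hF.fin_param
  rw [ncard_range_of_injective hf, Nat.card_fin] at hFn
  obtain ⟨u, hu, hfu⟩ := h𝒲 k f hFK
  exact ⟨u, mem_biUnion hFn hu, hfu⟩

end IsOmegaCover

theorem SigmaCompactSpace.sFinOmegaOmega [SigmaCompactSpace X] : SFinOmegaOmega X := by
  intro 𝒰 h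
  choose 𝒱 h𝒱𝒰 h𝒱fin h𝒱 using fun n =>
    (h n).exists_finite_forall_ncard_le (isCompact_compactCovering X n) n
  refine ⟨𝒱, fun n => ⟨h𝒱𝒰 n, h𝒱fin n⟩, .of_forall_finite_subset ?_ ?_ fun F hF => ?_⟩
  · simp only [mem_iUnion]
    rintro u ⟨n, hu⟩
    exact (h n).1 u (h𝒱𝒰 n hu)
  · simp only [mem_iUnion, not_exists]
    exact fun n hu => (h n).2.1 (h𝒱𝒰 n hu)
  · obtain ⟨N, hFN⟩ := hF.exists_subset_compactCovering
    let n := max N F.ncard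
    obtain ⟨u, hu, hFu⟩ :=
      h𝒱 n F (hFN.trans (compactCovering_subset X (le_max_left _ _))) hF (le_max_right _ _)
    exact ⟨u, mem_iUnion_of_mem n hu, hFu⟩

theorem stmt8_general (m : ℕ)
    (𝒰 : ℕ → Set (Set (Fin m → ℝ))) (h : ∀ n, IsOmegaCover (𝒰 n)) :
    ∃ 𝒱 : ℕ → Set (Set (Fin m → ℝ)), (∀ n, 𝒱 n ⊆ 𝒰 n ∧ (𝒱 n).Finite) ∧
      IsOmegaCover (⋃ n, 𝒱 n) :=
  SigmaCompactSpace.sFinOmegaOmega 𝒰 h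

theorem stmt8 (m : ℕ) (hm : 1 ≤ m)
    (𝒰 : ℕ → Set (Set (Fin m → ℝ))) (h : ∀ n, IsOmegaCover (𝒰 n)) :
    ∃ 𝒱 : ℕ → Set (Set (Fin m → ℝ)), (∀ n, 𝒱 n ⊆ 𝒰 n ∧ (𝒱 n).Finite) ∧
      IsOmegaCover (⋃ n, 𝒱 n) :=
  stmt8_general m 𝒰 h
end
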